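/- For any fixed positive integer exponents s_1, …, s_m there exists a constant c (depending only on s_1, …, s_m) such that for all primes p_1 < p_2 < ⋯ < p_m with p_1 > c, the square of side length n = p_1^{s_1}·p_2^{s_2}⋯p_m^{s_m} has no perfect Mondrian partition. -/
import Mathlib


/-- An axis-aligned rectangle with integer coordinates placed on the grid:
lower-left corner `(x, y)`, width `w`, and height `h`. -/
structure Rect where
  x : ℕ
  y : ℕ
  w : ℕ
  h : ℕ
deriving DecidableEq

/-- The area of a rectangle. -/
def Rect.area (r : Rect) : ℕ := r.w * r.h

/-- Two rectangles are congruent if they have the same dimensions,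
possibly after a ninety-degree rotation. -/
def Rect.Congruent (r s : Rect) : Prop :=
  (r.w = s.w ∧ r.h = s.h) ∨ (r.w = s.h ∧ r.h = s.w)

/-- The rectangle `r` covers the unit grid cell `[i, i+1) × [j, j+1)`. -/
def Rect.Covers (r : Rect) (i j : ℕ) : Prop :=
  r.x ≤ i ∧ i < r.x + r.w ∧ r.y ≤ j ∧ j < r.y + r.h

/-- A Mondrian partition of the `n × n` square: a finite collection of
pairwise non-congruent rectangles with positive integer side lengths that
tile the square (every cell of the square is covered by exactly one
rectangle, and rectangles lie inside the square). -/
structure Mondrian (n : ℕ) where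
  rects : Finset Rect
  pos : ∀ r ∈ rects, 0 < r.w ∧ 0 < r.h
  inside : ∀ r ∈ rects, r.x + r.w ≤ n ∧ r.y + r.h ≤ n
  cover : ∀ i j : ℕ, i < n → j < n → ∃! r : Rect, r ∈ rects ∧ r.Covers i j
  noncong : ∀ r ∈ rects, ∀ s ∈ rects, r ≠ s → ¬ r.Congruent s

/-- The defect of a Mondrian partition: the difference between the largest
and the smallest rectangle areas. -/
def Mondrian.defect {n : ℕ} (P : Mondrian n) : ℕ :=
  P.rects.sup fun r => P.rects.sup fun s => r.area - s.area

/-- A Mondrian partition is perfect if all its rectangles have the same area. -/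
def Mondrian.IsPerfect {n : ℕ} (P : Mondrian n) : Prop :=
  ∀ r ∈ P.rects, ∀ s ∈ P.rects, r.area = s.area

/-- `mondrianDk n k` is the minimum defect over all Mondrian partitions of the
`n × n` square using exactly `k` rectangles. -/
noncomputable def mondrianDk (n k : ℕ) : ℕ :=
  sInf {d | ∃ P : Mondrian n, P.rects.card = k ∧ P.defect = d}

/-- `mondrianD n` is the minimum defect over all Mondrian partitions of the
`n × n` square (into at least two rectangles). -/
noncomputable def mondrianD (n : ℕ) : ℕ :=
  sInf {d | ∃ P : Mondrian n, 2 ≤ P.rects.card ∧ P.defect = d}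

/-- For any fixed positive exponents `s₁, …, s_m` there is a constant `c` such
that for all primes `p₁ < ⋯ < p_m` with `p₁ > c`, the square of side length
`n = p₁^{s₁} ⋯ p_m^{s_m}` has no perfect Mondrian partition. -/
theorem no_perfect_of_small_prime (m : ℕ) (hm : 0 < m) (s : Fin m → ℕ)
    (hs : ∀ i, 1 ≤ s i) :
    ∃ c : ℕ, ∀ p : Fin m → ℕ, (∀ i, (p i).Prime) → StrictMono p →
      c < p ⟨0, hm⟩ →
      ¬ ∃ P : Mondrian (∏ i, p i ^ s i), 2 ≤ P.rects.card ∧ P.IsPerfect := by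
  classical
  refine ⟨∏ i, (2 * s i + 1), ?_⟩
  intro p hp hmono hc
  set n := ∏ i, p i ^ s i with hn
  rintro ⟨P, hk2, hperf⟩
  have hppos : ∀ i, 0 < p i := fun i => (hp i).pos
  have hnpos : 0 < n := Finset.prod_pos fun i _ => pow_pos (hppos i) _
  -- pick a rectangle and its area
  obtain ⟨r0, hr0⟩ := Finset.card_pos.mp (by omega : 0 < P.rects.card)
  set A := r0.area with hA
  have hApos : 0 < A := by
    obtain ⟨hw, hh⟩ := P.pos r0 hr0
    exact Nat.mul_pos hw hh
  have harea : ∀ r ∈ P.rects, r.area = A := fun r hr => hperf r hr r0 hr0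
  -- the cells of each rectangle
  set cells : Rect → Finset (ℕ × ℕ) := fun r =>
    Finset.Ico r.x (r.x + r.w) ×ˢ Finset.Ico r.y (r.y + r.h) with hcells
  -- the square decomposes as a disjoint union of the rectangles' cells
  have hsq : (Finset.range n ×ˢ Finset.range n) = P.rects.biUnion cells := by
    ext ⟨i, j⟩
    simp only [Finset.mem_product, Finset.mem_range, Finset.mem_biUnion, Finset.mem_Ico, hcells]
    constructor
    · rintro ⟨hi, hj⟩
      obtain ⟨r, ⟨hr, hcov⟩, _⟩ := P.cover i j hi hj
      exact ⟨r, hr, ⟨hcov.1, hcov.2.1⟩, hcov.2.2.1, hcov.2.2.2⟩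
    · rintro ⟨r, hr, ⟨_, hi⟩, _, hj⟩
      have h2 := P.inside r hr
      omega
  have hdisj : (P.rects : Set Rect).PairwiseDisjoint cells := by
    intro r hr t ht hrt
    simp only [Finset.disjoint_left]
    rintro ⟨i, j⟩ hir hit
    simp only [hcells, Finset.mem_product, Finset.mem_Ico] at hir hit
    have hin := P.inside r hr
    have hi : i < n := by omega
    have hj : j < n := by omega
    obtain ⟨u, _, huniq⟩ := P.cover i j hi hj
    have h1 : r = u := huniq r ⟨hr, ⟨hir.1.1, hir.1.2, hir.2.1, hir.2.2⟩⟩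
    have h2 : t = u := huniq t ⟨ht, ⟨hit.1.1, hit.1.2, hit.2.1, hit.2.2⟩⟩
    exact hrt (h1.trans h2.symm)
  -- counting: k * A = n * n
  have hsum : P.rects.card * A = n * n := by
    have h1 : (Finset.range n ×ˢ Finset.range n).card = ∑ r ∈ P.rects, (cells r).card := by
      rw [hsq, Finset.card_biUnion]
      intro r hr t ht hrt
      exact hdisj hr ht hrt
    have h2 : ∀ r ∈ P.rects, (cells r).card = A := by
      intro r hr
      simp only [hcells, Finset.card_product, Nat.card_Ico]
      have : r.x + r.w - r.x = r.w := by omega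
      have h' : r.y + r.h - r.y = r.h := by omega
      rw [this, h']
      exact harea r hr
    rw [Finset.sum_congr rfl h2, Finset.sum_const, smul_eq_mul] at h1
    simpa [Finset.card_product] using h1.symm
  -- widths are injective divisors of A
  have hwinj : Set.InjOn Rect.w (P.rects : Set Rect) := by
    intro r hr t ht hw
    by_contra hne
    apply P.noncong r hr t ht hne
    left
    refine ⟨hw, ?_⟩
    have h1 : r.w * r.h = A := harea r hr
    have h2 : t.w * t.h = A := harea t ht
    have hwpos : 0 < r.w := (P.pos r hr).1
    rw [hw] at h1
    exact Nat.eq_of_mul_eq_mul_left (hw ▸ hwpos) (h1.trans h2.symm)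
  have hAdvd : A ∣ n * n := ⟨P.rects.card, by rw [← hsum]; ring⟩
  have hnnne : n * n ≠ 0 := by positivity
  -- the number of rectangles is at most the number of divisors of n²
  have hkle : P.rects.card ≤ (n * n).divisors.card := by
    rw [← Finset.card_image_of_injOn hwinj]
    apply Finset.card_le_card
    intro w hw
    simp only [Finset.mem_image] at hw
    obtain ⟨r, hr, rfl⟩ := hw
    rw [Nat.mem_divisors]
    exact ⟨dvd_trans (Dvd.intro r.h ((harea r hr).symm ▸ rfl)) hAdvd, hnnne⟩
  -- the number of divisors of n² equals ∏ (2 sᵢ + 1)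
  have hnn : n * n = ∏ i, p i ^ (2 * s i) := by
    rw [hn, ← Finset.prod_mul_distrib]
    exact Finset.prod_congr rfl fun i _ => by rw [← pow_add]; ring_nf
  have hτ : (n * n).divisors.card = ∏ i, (2 * s i + 1) := by
    rw [hnn, ← ArithmeticFunction.sigma_zero_apply,
      ArithmeticFunction.isMultiplicative_sigma.map_prod _ Finset.univ ?_]
    · exact Finset.prod_congr rfl fun i _ =>
        ArithmeticFunction.sigma_zero_apply_prime_pow (hp i)
    · intro i _ j _ hij
      simp only [Function.onFun]
      exact Nat.Coprime.pow _ _ ((Nat.coprime_primes (hp i) (hp j)).mpr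
        (fun h => hij (hmono.injective h)))
  -- so card ≤ c < p₁
  have hklt : P.rects.card < p ⟨0, hm⟩ := lt_of_le_of_lt (hτ ▸ hkle) hc
  -- but card divides n², hence has a prime factor among the pᵢ, hence card ≥ p₁
  have hkdvd : P.rects.card ∣ n * n := ⟨A, hsum.symm⟩
  obtain ⟨q, hq, hqk⟩ := Nat.exists_prime_and_dvd (by omega : P.rects.card ≠ 1)
  have hqnn : q ∣ ∏ i, p i ^ (2 * s i) := hnn ▸ hqk.trans hkdvd
  obtain ⟨i, _, hqi⟩ := hq.prime.exists_mem_finset_dvd hqnn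
  have hqpi : q = p i := ((Nat.prime_dvd_prime_iff_eq hq (hp i)).mp (hq.dvd_of_dvd_pow hqi))
  have hple : p ⟨0, hm⟩ ≤ p i := hmono.monotone (by rw [Fin.le_def]; exact Nat.zero_le _)
  have : p ⟨0, hm⟩ ≤ P.rects.card := by
    calc p ⟨0, hm⟩ ≤ p i := hple
    _ = q := hqpi.symm
    _ ≤ P.rects.card := Nat.le_of_dvd (by omega) hqk
  omega
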